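/- arXiv:2402.01455 — 4 statements merged into one kernel-verified Lean document; each statement's English description precedes it below -/
import Mathlib

section
/- For any positive integer ℓ and any complex s, one has the identity ∑_{n ≥ 0} r₁(n+ℓ) r₁(n) (n+ℓ)^{-(s−1/2)} = 2^{2s} ∑_{d ∣ ℓ, d ≡ ℓ/d mod 2} (d + ℓ/d)^{1−2s}, where both sides are finite sums; here r₁(n) denotes the number of representations of n as a square of an integer, i.e. r₁(n) = #{m ∈ ℤ : m² = n}. -/
open Complex

/-- r₁(n) = #{m ∈ ℤ : m² = n}, the number of representations of n as a square. -/
noncomputable def r1 (n : ℕ) : ℕ :=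
  ((Finset.Icc (-(n : ℤ)) (n : ℤ)).filter fun m => m ^ 2 = (n : ℤ)).card

lemma sq_eq_sq_int {m a : ℤ} : m ^ 2 = a ^ 2 ↔ m = a ∨ m = -a := by
  constructor
  · intro h
    have h2 : (m - a) * (m + a) = 0 := by linear_combination h
    rcases mul_eq_zero.1 h2 with h | h
    · left; linarith
    · right; linarith
  · rintro (rfl | rfl) <;> ring

lemma r1_sq (a : ℕ) : r1 (a ^ 2) = if a = 0 then 1 else 2 := by
  unfold r1
  have hale : (a : ℤ) ≤ ((a^2 : ℕ) : ℤ) := by push_cast; nlinarith [Int.natCast_nonneg a]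
  have hset : ((Finset.Icc (-((a^2 : ℕ) : ℤ)) ((a^2 : ℕ) : ℤ)).filter fun m => m ^ 2 = ((a^2 : ℕ) : ℤ)) = {-(a:ℤ), (a:ℤ)} := by
    ext m
    simp only [Finset.mem_filter, Finset.mem_Icc, Finset.mem_insert, Finset.mem_singleton]
    constructor
    · rintro ⟨_, h⟩
      have : m ^ 2 = (a : ℤ) ^ 2 := by push_cast at h ⊢; linarith
      rcases sq_eq_sq_int.1 this with h | h
      · right; exact h
      · left; exact h
    · rintro (rfl | rfl)
      · refine ⟨⟨by linarith, by linarith⟩, by push_cast; ring⟩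
      · refine ⟨⟨by linarith, by linarith⟩, by push_cast; ring⟩
  rw [hset]
  rcases eq_or_ne a 0 with rfl | ha
  · simp
  · rw [if_neg ha, Finset.card_insert_of_notMem, Finset.card_singleton]
    simp only [Finset.mem_singleton]
    intro h
    have : (a : ℤ) = 0 := by linarith
    exact ha (by exact_mod_cast this)

lemma r1_eq_zero {n : ℕ} (h : ∀ a : ℕ, a ^ 2 ≠ n) : r1 n = 0 := by
  unfold r1
  rw [Finset.card_eq_zero, Finset.filter_eq_empty_iff]
  intro m _
  intro hm
  apply h m.natAbs
  have : (m.natAbs : ℤ) ^ 2 = (n : ℤ) := by rw [← hm, ← _root_.sq_abs m, Int.abs_eq_natAbs]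
  exact_mod_cast this

lemma r1_ne_zero {n : ℕ} (h : r1 n ≠ 0) : ∃ a : ℕ, a ^ 2 = n := by
  by_contra hc
  push_neg at hc
  exact h (r1_eq_zero hc)

lemma two_cpow_mul (s : ℂ) : (2:ℂ)^(2*s) * (2:ℂ)^(1-2*s) = 2 := by
  rw [← Complex.cpow_add _ _ two_ne_zero, show 2*s + (1-2*s) = 1 by ring, Complex.cpow_one]

lemma natcast_mul_cpow (b c : ℕ) (w : ℂ) : ((b * c : ℕ) : ℂ) ^ w = (b:ℂ)^w * (c:ℂ)^w := by
  have := Complex.mul_cpow_ofReal_nonneg (Nat.cast_nonneg b : (0:ℝ) ≤ b) (Nat.cast_nonneg c) w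
  push_cast at this ⊢
  exact this

lemma natcast_sq_cpow (b : ℕ) (hb : b ≠ 0) (w : ℂ) :
    ((b^2 : ℕ) : ℂ) ^ w = (b:ℂ)^(2*w) := by
  rw [pow_two, natcast_mul_cpow, ← Complex.cpow_add _ _ (by exact_mod_cast hb), two_mul]

lemma key_arith {d e ℓ : ℕ} (hde : d * e = ℓ) (hpar : d % 2 = e % 2)
    (hd1 : 1 ≤ d) (he1 : 1 ≤ e) :
    ∃ a b : ℕ, d + e = 2 * b ∧ b ^ 2 = a ^ 2 + ℓ ∧ (a = 0 ↔ d = e) := by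
  set b := (d + e) / 2 with hb
  set a := b - min d e with haa
  have h2b : d + e = 2 * b := by omega
  have h2a : 2 * a + 2 * (min d e) = d + e := by omega
  refine ⟨a, b, h2b, ?_, by omega⟩
  rcases le_total d e with h | h
  · have he' : e = 2 * a + d := by omega
    have hb' : b = a + d := by omega
    rw [hb', ← hde, he']; ring
  · have hd' : d = 2 * a + e := by omega
    have hb' : b = a + e := by omega
    rw [hb', ← hde, hd']; ring

lemma quad_roots {d e d' e' : ℕ} (hsum : d + e = d' + e') (hprod : d * e = d' * e') :
    d = d' ∨ d = e' := by
  have h1 : (d:ℤ) + e = d' + e' := by exact_mod_cast hsum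
  have h2 : (d:ℤ) * e = d' * e' := by exact_mod_cast hprod
  have h : ((d:ℤ) - d') * ((d:ℤ) - e') = 0 := by linear_combination (d:ℤ) * h1 - h2
  rcases mul_eq_zero.1 h with h | h
  · left; omega
  · right; omega

/-- For ℓ ≥ 1 and any s ∈ ℂ:
∑_{n ≥ 0} r₁(n+ℓ) r₁(n) (n+ℓ)^{-(s-1/2)} = 2^{2s} ∑_{d ∣ ℓ, d ≡ ℓ/d mod 2} (d + ℓ/d)^{1-2s},
where the left side has only finitely many nonzero terms. -/
theorem r1_shifted_convolution_identity (ℓ : ℕ) (hℓ : 1 ≤ ℓ) (s : ℂ) :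
    (Function.support fun n : ℕ =>
        ((r1 (n + ℓ) * r1 n : ℕ) : ℂ) * ((n + ℓ : ℕ) : ℂ) ^ (-(s - 1/2))).Finite ∧
    ∑' n : ℕ, ((r1 (n + ℓ) * r1 n : ℕ) : ℂ) * ((n + ℓ : ℕ) : ℂ) ^ (-(s - 1/2)) =
      (2 : ℂ) ^ (2 * s) *
        ∑ d ∈ ℓ.divisors.filter (fun d => d % 2 = (ℓ / d) % 2),
          ((d : ℂ) + ((ℓ / d : ℕ) : ℂ)) ^ (1 - 2 * s) := by
  classical
  have hℓ0 : ℓ ≠ 0 := by omega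
  set D := ℓ.divisors.filter (fun d => d % 2 = (ℓ / d) % 2) with hD
  set F : ℕ → ℕ := fun d => ((d + ℓ / d) / 2) ^ 2 - ℓ with hF
  set T := D.image F with hT
  set f : ℕ → ℂ := fun n =>
    ((r1 (n + ℓ) * r1 n : ℕ) : ℂ) * ((n + ℓ : ℕ) : ℂ) ^ (-(s - 1/2)) with hf
  -- basic facts about members of D
  have hDmem : ∀ d ∈ D, d * (ℓ / d) = ℓ ∧ 1 ≤ d ∧ 1 ≤ ℓ / d ∧ d % 2 = (ℓ / d) % 2 := by
    intro d hd
    rw [hD, Finset.mem_filter, Nat.mem_divisors] at hd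
    obtain ⟨⟨hdvd, _⟩, hpar⟩ := hd
    have h1 : d * (ℓ / d) = ℓ := Nat.mul_div_cancel' hdvd
    have hd1 : 1 ≤ d := by
      rcases Nat.eq_zero_or_pos d with h | h
      · subst h; simp at h1; omega
      · exact h
    have he1 : 1 ≤ ℓ / d := Nat.div_pos (Nat.le_of_dvd (by omega) hdvd) hd1
    exact ⟨h1, hd1, he1, hpar⟩
  -- a, b data for each d ∈ D
  have hab : ∀ d ∈ D, ∃ a b : ℕ, d + ℓ / d = 2 * b ∧ b ^ 2 = a ^ 2 + ℓ ∧
      (a = 0 ↔ d = ℓ / d) ∧ F d = a ^ 2 ∧ F d + ℓ = b ^ 2 ∧ 1 ≤ b := by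
    intro d hd
    obtain ⟨h1, hd1, he1, hpar⟩ := hDmem d hd
    obtain ⟨a, b, h2b, hb2, ha0⟩ := key_arith h1 hpar hd1 he1
    have hbq : (d + ℓ / d) / 2 = b := by omega
    have hFd : F d = a ^ 2 := by
      rw [hF]; simp only; rw [hbq]
      exact Nat.sub_eq_of_eq_add hb2
    refine ⟨a, b, h2b, hb2, ha0, hFd, ?_, by nlinarith⟩
    rw [hFd]; omega
  -- symmetry: ℓ/d is also in D with the same F value
  have hsymm : ∀ d ∈ D, (ℓ / d) ∈ D ∧ F (ℓ / d) = F d ∧ ℓ / (ℓ / d) = d := by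
    intro d hd
    rw [hD, Finset.mem_filter, Nat.mem_divisors] at hd
    obtain ⟨⟨hdvd, _⟩, hpar⟩ := hd
    have hdd : ℓ / (ℓ / d) = d := Nat.div_div_self hdvd hℓ0
    refine ⟨?_, ?_, hdd⟩
    · rw [hD, Finset.mem_filter, Nat.mem_divisors]
      exact ⟨⟨Nat.div_dvd_of_dvd hdvd, hℓ0⟩, by rw [hdd]; omega⟩
    · rw [hF]; simp only [hdd, Nat.add_comm]
  -- support is contained in T
  have hsupp : ∀ n : ℕ, f n ≠ 0 → n ∈ T := by
    intro n hn
    have hr : r1 (n + ℓ) * r1 n ≠ 0 := by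
      intro h
      apply hn
      rw [hf]; simp only [h, Nat.cast_zero, zero_mul]
    have hrb : r1 (n + ℓ) ≠ 0 := fun h => hr (by rw [h, Nat.zero_mul])
    have hra : r1 n ≠ 0 := fun h => hr (by rw [h, Nat.mul_zero])
    obtain ⟨b, hb2⟩ := r1_ne_zero hrb
    obtain ⟨a, ha2⟩ := r1_ne_zero hra
    have hal : a < b := by
      by_contra h
      push_neg at h
      have h1 : b ^ 2 ≤ a ^ 2 := Nat.pow_le_pow_left h 2
      rw [ha2, hb2] at h1
      omega
    have hprod : (b - a) * (b + a) = ℓ := by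
      zify [show a ≤ b by omega]
      have h1 : (b:ℤ)^2 = (n:ℤ) + ℓ := by exact_mod_cast hb2
      have h2 : (a:ℤ)^2 = (n:ℤ) := by exact_mod_cast ha2
      linear_combination h1 - h2
    have hediv : ℓ / (b - a) = b + a := by
      rw [← hprod, Nat.mul_div_cancel_left _ (by omega : 0 < b - a)]
    have hdD : (b - a) ∈ D := by
      rw [hD, Finset.mem_filter, Nat.mem_divisors, hediv]
      exact ⟨⟨⟨b + a, hprod.symm⟩, hℓ0⟩, by omega⟩
    refine Finset.mem_image.mpr ⟨b - a, hdD, ?_⟩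
    rw [hF]; simp only [hediv]
    rw [show (b - a + (b + a)) / 2 = b by omega]
    exact Nat.sub_eq_of_eq_add hb2
  constructor
  · exact Set.Finite.subset T.finite_toSet (fun n hn => hsupp n hn)
  · have htsum : (∑' n : ℕ, f n) = ∑ n ∈ T, f n :=
      tsum_eq_sum (fun n hn => by_contra fun h => hn (hsupp n h))
    rw [htsum]
    set g : ℕ → ℂ := fun n => 2 * ((Nat.sqrt (n + ℓ) : ℕ) : ℂ) ^ (1 - 2*s) with hg
    have step1 : ∀ d ∈ D, (2:ℂ) ^ (2*s) * ((d : ℂ) + ((ℓ / d : ℕ) : ℂ)) ^ (1 - 2*s) = g (F d) := by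
      intro d hd
      obtain ⟨a, b, h2b, hb2, ha0, hFa, hFb, hb1⟩ := hab d hd
      have hsqrt : Nat.sqrt (F d + ℓ) = b := by rw [hFb, Nat.sqrt_eq']
      have hcast : (d : ℂ) + ((ℓ / d : ℕ) : ℂ) = ((2 * b : ℕ) : ℂ) := by
        push_cast; exact_mod_cast congrArg (Nat.cast : ℕ → ℂ) h2b
      rw [hg]; simp only [hsqrt]
      rw [hcast, natcast_mul_cpow, ← mul_assoc]
      push_cast
      rw [two_cpow_mul]
    have step2 : ∑ d ∈ D, g (F d) = ∑ n ∈ T, (D.filter fun d => F d = n).card • g n :=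
      Finset.sum_comp g F
    have step3 : ∀ n ∈ T, (D.filter fun d => F d = n).card • g n = f n := by
      intro n hn
      obtain ⟨d, hdD, hFd⟩ := Finset.mem_image.mp hn
      obtain ⟨a, b, h2b, hb2, ha0, hFa, hFb, hb1⟩ := hab d hdD
      have hna : n = a ^ 2 := by rw [← hFd]; exact hFa
      have hnb : n + ℓ = b ^ 2 := by rw [← hFd]; exact hFb
      have hsqrt : Nat.sqrt (n + ℓ) = b := by rw [hnb, Nat.sqrt_eq']
      have hfiber : (D.filter fun d' => F d' = n) = insert d {ℓ / d} := by
        ext d'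
        simp only [Finset.mem_filter, Finset.mem_insert, Finset.mem_singleton]
        constructor
        · rintro ⟨hd'D, hFd'⟩
          obtain ⟨a', b', h2b', hb2', ha0', hFa', hFb', hb1'⟩ := hab d' hd'D
          have hbb : b' = b := by
            have : b' ^ 2 = b ^ 2 := by rw [← hFb', hFd', hnb]
            exact Nat.pow_left_injective (by norm_num) this
          have hsum : d' + ℓ / d' = d + ℓ / d := by omega
          have hp1 := (hDmem d' hd'D).1
          have hp2 := (hDmem d hdD).1
          exact quad_roots hsum (by rw [hp1, hp2])
        · rintro (rfl | rfl)
          · exact ⟨hdD, hFd⟩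
          · obtain ⟨h1, h2, h3⟩ := hsymm d hdD
            exact ⟨h1, by rw [h2, hFd]⟩
      rw [hfiber]
      have hcard : (insert d ({ℓ / d} : Finset ℕ)).card = if a = 0 then 1 else 2 := by
        rcases eq_or_ne d (ℓ / d) with h | h
        · rw [if_pos (ha0.mpr h), ← h]; simp
        · rw [if_neg (fun h0 => h (ha0.mp h0)), Finset.card_insert_of_notMem (by simpa using h)]
          simp
      rw [hcard]
      simp only [hf, hg, hsqrt]
      rw [hnb, hna]
      rw [r1_sq a, r1_sq b, if_neg (by omega : ¬ b = 0)]
      rw [natcast_sq_cpow b (by omega), show 2 * -(s - 1/2) = 1 - 2*s by ring]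
      rcases eq_or_ne a 0 with h | h
      · rw [if_pos h]; simp only [nsmul_eq_mul]; push_cast; ring
      · rw [if_neg h]; simp only [nsmul_eq_mul]; push_cast; ring
    calc ∑ n ∈ T, f n = ∑ n ∈ T, (D.filter fun d => F d = n).card • g n :=
          Finset.sum_congr rfl (fun n hn => (step3 n hn).symm)
      _ = ∑ d ∈ D, g (F d) := step2.symm
      _ = ∑ d ∈ D, (2:ℂ) ^ (2*s) * ((d : ℂ) + ((ℓ / d : ℕ) : ℂ)) ^ (1 - 2*s) :=
          Finset.sum_congr rfl (fun d hd => (step1 d hd).symm)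
      _ = (2:ℂ) ^ (2*s) * ∑ d ∈ D, ((d : ℂ) + ((ℓ / d : ℕ) : ℂ)) ^ (1 - 2*s) :=
          (Finset.mul_sum _ _ _).symm
end

section
/- For all positive integers ℓ, one has 2σ_{−2}(ℓ/4) − σ_{−2}(ℓ/2) + σ_{−2}(ℓ_o) ≥ 0, with equality if and only if ℓ ≡ 2 mod 4. Here σ_ν(m) = ∑_{d ∣ m} d^ν for positive integers m, with the convention σ_ν(m) = 0 when m is not a positive integer, and ℓ_o denotes the odd part of ℓ. -/
/-- σ_ν(m) = ∑_{d ∣ m} d^ν as a rational number, for ν ∈ ℤ. -/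
def sigmaZ (ν : ℤ) (m : ℕ) : ℚ := ∑ d ∈ m.divisors, (d : ℚ) ^ ν

/-!
Write `ℓ = 2^a · o` with `o` odd and put `s_k = σ₋₂(2^k)`, `t = σ₋₂(o) > 0`. For `a = 0` the
combination is `t`, for `a = 1` it is `-σ₋₂(ℓ/2) + t = 0` as `ℓ/2 = o`, and for `a = b + 2`
multiplicativity turns it into `(2 s_b - s_{b+1} + 1) t = (s_b + 1 - 4^{-(b+1)}) t > 0`.
-/

section sigmaZ

variable (ν : ℤ)

theorem sigmaZ_pos {m : ℕ} (hm : 0 < m) : 0 < sigmaZ ν m :=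
  Finset.sum_pos (fun _ hd => zpow_pos (Nat.cast_pos.2 (Nat.pos_of_mem_divisors hd)) ν)
    ⟨1, Nat.one_mem_divisors.2 hm.ne'⟩

theorem sigmaZ_mul_of_coprime {m n : ℕ} (h : m.Coprime n) :
    sigmaZ ν (m * n) = sigmaZ ν m * sigmaZ ν n := by
  rw [sigmaZ, Nat.divisors_mul, Finset.mul_def, Finset.sum_image h.mul_injOn_divisors,
    Finset.sum_product, sigmaZ, sigmaZ, Finset.sum_mul_sum]
  simp only [Nat.cast_mul, mul_zpow]

theorem sigmaZ_prime_pow_succ {p : ℕ} (hp : p.Prime) (k : ℕ) :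
    sigmaZ ν (p ^ (k + 1)) = sigmaZ ν (p ^ k) + ((p ^ (k + 1) : ℕ) : ℚ) ^ ν := by
  simp only [sigmaZ, Nat.sum_divisors_prime_pow hp, Finset.sum_range_succ _ (k + 1)]

theorem sigmaZ_combination_pos {p : ℕ} (hp : p.Prime) (hν : ν ≤ 0) (b : ℕ) {m : ℕ}
    (hm : 0 < m) (hpm : ¬p ∣ m) :
    0 < 2 * sigmaZ ν (p ^ b * m) - sigmaZ ν (p ^ (b + 1) * m) + sigmaZ ν m := by
  have hcop (k : ℕ) : (p ^ k).Coprime m := ((Nat.Prime.coprime_iff_not_dvd hp).2 hpm).pow_left k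
  have hle : ((p ^ (b + 1) : ℕ) : ℚ) ^ ν ≤ 1 :=
    zpow_le_one_of_nonpos₀ (mod_cast Nat.one_le_pow _ _ hp.pos) hν
  rw [sigmaZ_mul_of_coprime ν (hcop b), sigmaZ_mul_of_coprime ν (hcop (b + 1)),
    sigmaZ_prime_pow_succ ν hp]
  have hs := sigmaZ_pos ν (pow_pos hp.pos b)
  have ht := sigmaZ_pos ν hm
  nlinarith

end sigmaZ

/-- For all positive integers ℓ, 2σ₋₂(ℓ/4) − σ₋₂(ℓ/2) + σ₋₂(ℓ_o) ≥ 0, with equality iff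
ℓ ≡ 2 mod 4.  Here σ_ν(m) = 0 when m is not a positive integer (encoded via the
divisibility conditions) and ℓ_o = (ℓ / 2 ^ ℓ.factorization 2) is the odd part of ℓ. -/
theorem sigma_combination_nonneg (ℓ : ℕ) (hℓ : 0 < ℓ) :
    0 ≤ 2 * (if 4 ∣ ℓ then sigmaZ (-2) (ℓ / 4) else 0)
        - (if 2 ∣ ℓ then sigmaZ (-2) (ℓ / 2) else 0)
        + sigmaZ (-2) ((ℓ / 2 ^ ℓ.factorization 2)) ∧
    (2 * (if 4 ∣ ℓ then sigmaZ (-2) (ℓ / 4) else 0)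
        - (if 2 ∣ ℓ then sigmaZ (-2) (ℓ / 2) else 0)
        + sigmaZ (-2) ((ℓ / 2 ^ ℓ.factorization 2)) = 0 ↔ ℓ % 4 = 2) := by
  obtain ⟨a, o, ho, rfl⟩ := Nat.exists_eq_pow_mul_and_not_dvd hℓ.ne' 2 (by norm_num)
  rw [Nat.ordCompl_pow_mul_of_not_dvd a Nat.prime_two ho]
  have hopos : 0 < o := Nat.pos_of_mul_pos_left hℓ
  have ht := sigmaZ_pos (-2) hopos
  rcases a with _ | _ | b
  · have h4 : ¬4 ∣ 2 ^ 0 * o := by omega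
    have h2 : ¬2 ∣ 2 ^ 0 * o := by omega
    simp only [h4, h2, if_false]
    exact ⟨by linarith, iff_of_false (by linarith) (by omega)⟩
  · have h4 : ¬4 ∣ 2 ^ 1 * o := by omega
    have h2 : 2 ∣ 2 ^ 1 * o := by omega
    have hdiv : 2 ^ 1 * o / 2 = o := by omega
    simp only [h4, h2, hdiv, if_false, if_true]
    exact ⟨by linarith, iff_of_true (by ring) (by omega)⟩
  · rw [show b + 1 + 1 = b + 2 from rfl]
    have hpos := sigmaZ_combination_pos (-2) Nat.prime_two (by norm_num) b hopos ho
    have h4 : 4 ∣ 2 ^ (b + 2) * o := ⟨2 ^ b * o, by ring⟩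
    have h2 : 2 ∣ 2 ^ (b + 2) * o := ⟨2 ^ (b + 1) * o, by ring⟩
    have hdiv4 : 2 ^ (b + 2) * o / 4 = 2 ^ b * o :=
      Nat.div_eq_of_eq_mul_left (by norm_num) (by ring)
    have hdiv2 : 2 ^ (b + 2) * o / 2 = 2 ^ (b + 1) * o :=
      Nat.div_eq_of_eq_mul_left (by norm_num) (by ring)
    simp only [h4, h2, hdiv4, hdiv2, if_true]
    exact ⟨hpos.le, iff_of_false hpos.ne' (by omega)⟩
end

section
/- Define G(s, n, N) = ∫₀^∞ y^{s+1/2} Γ(−1/2, ny) Γ(−1/2, Ny) e^{ny} dy/y for positive reals n ≤ N. Then G(s, n, N) converges absolutely for real s > 1/2, and satisfies the bound G(s, n, n) ≪_s n^{−s−1/2} for fixed real s > 1/2. -/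
open Real MeasureTheory

/-- The (real) upper incomplete gamma function Γ(a, y) = ∫_y^∞ t^{a-1} e^{-t} dt. -/
noncomputable def realIncGamma (a y : ℝ) : ℝ :=
  ∫ t in Set.Ioi y, t ^ (a - 1) * Real.exp (-t)

/-- G(s, n, N) = ∫₀^∞ y^{s+1/2} Γ(−1/2, ny) Γ(−1/2, Ny) e^{ny} dy/y. -/
noncomputable def Gfun (s n N : ℝ) : ℝ :=
  ∫ y in Set.Ioi (0 : ℝ),
    y ^ (s + 1/2) * realIncGamma (-(1/2)) (n * y) * realIncGamma (-(1/2)) (N * y)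
      * Real.exp (n * y) / y

/-!
For `a < 0` and `x > 0`, bounding `e^{-t}` by `e^{-x}` on `(x, ∞)` gives
`Γ(a, x) ≤ x^a e^{-x} / (-a)`. In the integrand of `G(s, n, N)` the factor `e^{ny}` then cancels
`e^{-ny}`, leaving the majorant `4 (nN)^{-1/2} y^{s-3/2} e^{-Ny}`: a Gamma integral, finite for
`s > 1/2`, which at `N = n` equals `4 Γ(s - 1/2) n^{-s-1/2}`.
-/

open Set

lemma integrableOn_rpow_sub_one_mul_exp_neg_Ioi {a x : ℝ} (ha : a < 0) (hx : 0 < x) :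
    IntegrableOn (fun t : ℝ => t ^ (a - 1) * exp (-t)) (Ioi x) := by
  refine (integrableOn_Ioi_rpow_of_lt (by linarith : a - 1 < -1) hx).mono' ?_ ?_
  · exact ((continuousOn_id.rpow_const fun t ht => Or.inl (hx.trans ht).ne').mul
      continuousOn_id.neg.rexp).aestronglyMeasurable measurableSet_Ioi
  · filter_upwards [ae_restrict_mem measurableSet_Ioi] with t ht
    have ht0 : 0 < t := hx.trans ht
    rw [Real.norm_of_nonneg (by positivity)]
    exact mul_le_of_le_one_right (by positivity) (exp_le_one_iff.2 (by linarith))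

lemma realIncGamma_nonneg (a : ℝ) {x : ℝ} (hx : 0 ≤ x) : 0 ≤ realIncGamma a x :=
  setIntegral_nonneg measurableSet_Ioi fun t ht => by
    have : 0 < t := hx.trans_lt ht
    positivity

lemma realIncGamma_antitoneOn {a : ℝ} (ha : a < 0) : AntitoneOn (realIncGamma a) (Ioi 0) :=
  fun x hx _ _ hxy => setIntegral_mono_set (integrableOn_rpow_sub_one_mul_exp_neg_Ioi ha hx)
    ((ae_restrict_mem measurableSet_Ioi).mono fun t ht => by
      have : 0 < t := lt_trans hx ht
      positivity)
    (Ioi_subset_Ioi hxy).eventuallyLE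

lemma realIncGamma_le {a x : ℝ} (ha : a < 0) (hx : 0 < x) :
    realIncGamma a x ≤ x ^ a * exp (-x) / (-a) :=
  calc realIncGamma a x ≤ ∫ t in Ioi x, t ^ (a - 1) * exp (-x) := by
        refine setIntegral_mono_on (integrableOn_rpow_sub_one_mul_exp_neg_Ioi ha hx)
          ((integrableOn_Ioi_rpow_of_lt (by linarith) hx).mul_const _) measurableSet_Ioi
          fun t ht => ?_
        have : 0 < t := hx.trans ht
        gcongr
        exact ht.le
    _ = x ^ a * exp (-x) / (-a) := by
        rw [integral_mul_const, integral_Ioi_rpow_of_lt (by linarith) hx, sub_add_cancel]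
        ring

lemma integrableOn_rpow_sub_one_mul_exp_neg_mul {a r : ℝ} (ha : 0 < a) (hr : 0 < r) :
    IntegrableOn (fun t : ℝ => t ^ (a - 1) * exp (-(r * t))) (Ioi 0) :=
  .of_integral_ne_zero <| by
    rw [integral_rpow_mul_exp_neg_mul_Ioi ha hr]
    have := Gamma_pos_of_pos ha
    positivity

noncomputable def GfunIntegrand (s n N y : ℝ) : ℝ :=
  y ^ (s + 1/2) * realIncGamma (-(1/2)) (n * y) * realIncGamma (-(1/2)) (N * y)
    * exp (n * y) / y

section GfunIntegrand

variable {s n N : ℝ}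

lemma norm_GfunIntegrand_le (hn : 0 < n) (hnN : n ≤ N) {y : ℝ} (hy : 0 < y) :
    ‖GfunIntegrand s n N y‖ ≤
      4 * (n * N) ^ (-(1/2 : ℝ)) * (y ^ (s - 1/2 - 1) * exp (-(N * y))) := by
  have hN : 0 < N := hn.trans_le hnN
  have hny : 0 < n * y := by positivity
  have hNy : 0 < N * y := by positivity
  have bound_n := realIncGamma_le (by norm_num : -(1/2 : ℝ) < 0) hny
  have bound_N := realIncGamma_le (by norm_num : -(1/2 : ℝ) < 0) hNy
  have nonneg_n := realIncGamma_nonneg (-(1/2)) hny.le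
  have nonneg_N := realIncGamma_nonneg (-(1/2)) hNy.le
  rw [GfunIntegrand, Real.norm_of_nonneg (by positivity)]
  have rpow_y :
      y ^ (s + 1/2) * y ^ (-(1/2 : ℝ)) * y ^ (-(1/2 : ℝ)) / y = y ^ (s - 1/2 - 1) := by
    rw [← Real.rpow_add hy, ← Real.rpow_add hy, Real.rpow_sub_one hy.ne']
    ring_nf
  calc _ ≤ y ^ (s + 1/2) * ((n * y) ^ (-(1/2 : ℝ)) * exp (-(n * y)) / (-(-(1/2))))
          * ((N * y) ^ (-(1/2 : ℝ)) * exp (-(N * y)) / (-(-(1/2)))) * exp (n * y) / y := by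
        gcongr
    _ = 4 * (n * N) ^ (-(1/2 : ℝ))
          * ((y ^ (s + 1/2) * y ^ (-(1/2 : ℝ)) * y ^ (-(1/2 : ℝ)) / y)
          * (exp (-(n * y)) * exp (n * y)) * exp (-(N * y))) := by
        rw [Real.mul_rpow hn.le hy.le, Real.mul_rpow hN.le hy.le, Real.mul_rpow hn.le hN.le]
        ring
    _ = _ := by
        rw [rpow_y, ← exp_add, neg_add_cancel, exp_zero, mul_one]

lemma aestronglyMeasurable_GfunIntegrand (hn : 0 < n) (hN : 0 < N) :
    AEStronglyMeasurable (GfunIntegrand s n N) (volume.restrict (Ioi 0)) := by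
  have incGamma_comp {c : ℝ} (hc : 0 < c) :
      AEMeasurable (fun y => realIncGamma (-(1/2)) (c * y)) (volume.restrict (Ioi 0)) :=
    aemeasurable_restrict_of_antitoneOn measurableSet_Ioi fun x hx y hy hxy =>
      realIncGamma_antitoneOn (by norm_num : -(1/2 : ℝ) < 0) (mul_pos hc hx) (mul_pos hc hy)
        (by gcongr)
  have rpow : AEMeasurable (fun y : ℝ => y ^ (s + 1/2)) (volume.restrict (Ioi 0)) :=
    (continuousOn_id.rpow_const fun t ht => Or.inl (ne_of_gt ht)).aemeasurable measurableSet_Ioi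
  exact ((((rpow.mul (incGamma_comp hn)).mul (incGamma_comp hN)).mul
    (measurable_exp.comp (measurable_const_mul n)).aemeasurable).div
    aemeasurable_id).aestronglyMeasurable

lemma integrableOn_GfunIntegrand (hs : 1/2 < s) (hn : 0 < n) (hnN : n ≤ N) :
    IntegrableOn (GfunIntegrand s n N) (Ioi 0) := by
  have hN : 0 < N := hn.trans_le hnN
  refine ((integrableOn_rpow_sub_one_mul_exp_neg_mul (a := s - 1/2) (by linarith) hN).const_mul
    (4 * (n * N) ^ (-(1/2 : ℝ)))).mono' (aestronglyMeasurable_GfunIntegrand hn hN) ?_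
  filter_upwards [ae_restrict_mem measurableSet_Ioi] with y hy
  exact norm_GfunIntegrand_le hn hnN hy

lemma abs_Gfun_self_le (hs : 1/2 < s) (hn : 0 < n) :
    |Gfun s n n| ≤ 4 * Gamma (s - 1/2) * n ^ (-s - 1/2) := by
  have hs' : 0 < s - 1/2 := by linarith
  calc |Gfun s n n|
      ≤ ∫ y in Ioi 0, 4 * (n * n) ^ (-(1/2 : ℝ)) * (y ^ (s - 1/2 - 1) * exp (-(n * y))) :=
        norm_integral_le_of_norm_le
          ((integrableOn_rpow_sub_one_mul_exp_neg_mul hs' hn).const_mul _)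
          ((ae_restrict_mem measurableSet_Ioi).mono fun y hy => norm_GfunIntegrand_le hn le_rfl hy)
    _ = 4 * Gamma (s - 1/2) * n ^ (-s - 1/2) := by
        have powers : (n * n) ^ (-(1/2 : ℝ)) * (1 / n) ^ (s - 1/2) = n ^ (-s - 1/2) := by
          rw [Real.mul_rpow hn.le hn.le, ← Real.rpow_add hn, one_div n, Real.inv_rpow hn.le,
            ← Real.rpow_neg hn.le, ← Real.rpow_add hn]
          ring_nf
        rw [integral_const_mul, integral_rpow_mul_exp_neg_mul_Ioi hs' hn, ← powers]
        ring

end GfunIntegrand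

/-- For real s > 1/2, the integral defining G(s,n,N) converges absolutely for all
0 < n ≤ N, and G(s,n,n) ≪_s n^{−s−1/2}. -/
theorem Gfun_integrable_and_bound (s : ℝ) (hs : 1/2 < s) :
    (∀ n N : ℝ, 0 < n → n ≤ N →
      IntegrableOn
        (fun y : ℝ => y ^ (s + 1/2) * realIncGamma (-(1/2)) (n * y)
          * realIncGamma (-(1/2)) (N * y) * Real.exp (n * y) / y) (Set.Ioi 0)) ∧
    ∃ C : ℝ, 0 < C ∧ ∀ n : ℝ, 0 < n → |Gfun s n n| ≤ C * n ^ (-s - 1/2) :=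
  ⟨fun _ _ hn hnN => integrableOn_GfunIntegrand hs hn hnN,
    4 * Gamma (s - 1/2), mul_pos four_pos (Gamma_pos_of_pos (by linarith)),
    fun _ hn => abs_Gfun_self_le hs hn⟩
end

section
/- For odd positive integers m, the twisted Gauss-type sum ∑_{j mod 2m} (m/j) e(j/8) vanishes unless m = 2n² for some integer n — which is impossible for odd m — and for even m the sum ∑_{j mod 2m} (m/j) e(j/8) vanishes unless m = 2n², in which case it equals √2 · φ(2n²). Formally: for every even positive integer m, ∑_{j=0}^{2m−1} (m/j) e^{2πi j/8} = √2 · φ(m) if m is twice a perfect square, and 0 otherwise. -/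
open Real
open scoped Classical

/-- The Kronecker symbol factor at 2: (m/2) = 0 if m even, 1 if m ≡ ±1 mod 8,
−1 if m ≡ ±3 mod 8. -/
def kronTwo (m : ℤ) : ℤ :=
  if m % 2 = 0 then 0 else if m % 8 = 1 ∨ m % 8 = 7 then 1 else -1

/-- The Kronecker symbol (m/j) with lower entry j ≥ 0: multiplicative in j, equal to the
Jacobi symbol on the odd part of j, with the factor at 2 given by `kronTwo`, and with
(m/0) = 1 if m = ±1 and 0 otherwise. -/
def kron (m : ℤ) (j : ℕ) : ℤ :=
  if j = 0 then (if m = 1 ∨ m = -1 then 1 else 0)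
  else kronTwo m ^ (j.factorization 2) * jacobiSym m (j / 2 ^ j.factorization 2)

/-!
Write `m = 2 ^ e * u` with `e ≥ 1` and `u` odd. Multiplicativity, the supplementary law at `2` and
quadratic reciprocity give `(m/j) = χ₈(j) ^ e χ₄(j) ^ ((u - 1) / 2) (j/u)` for odd `j`, and both
sides vanish for even `j`. Hence the summand is `D(j) (j/u)` with
`D(j) = χ₈(j) ^ e χ₄(j) ^ ((u - 1) / 2) ζ₈ ^ j`, and `D(j + 4) = (-1) ^ (e + 1) D(j)`.

For even `e` the summand is antiperiodic with period `4u` and `[0, 2m)` is a union of whole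
periods `8u`, so the sum vanishes. For odd `e` it is `4u`-periodic, and by the Chinese remainder
theorem the sum over one period is `(∑_{j<4} D(j)) (∑_{j<u} (j/u))`. The second factor is `φ(u)`
if `u` is a square (and then `u ≡ 1 mod 4`, which makes the first factor `ζ₈ - ζ₈³ = √2`) and `0`
otherwise, because multiplying `j` by some `c` with `(c/u) = -1` negates it. Finally, `m` is twice
a square exactly when `e` is odd and `u` is a square.
-/

open Finset Function ZMod

namespace Function

variable {M : Type*}

theorem Periodic.sum_range_mul [AddCommMonoid M] {f : ℕ → M} {p : ℕ} (h : Periodic f p) (n : ℕ) :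
    ∑ j ∈ range (n * p), f j = n • ∑ j ∈ range p, f j := by
  induction n with
  | zero => simp
  | succ n ih =>
    rw [Nat.succ_mul, sum_range_add, ih, succ_nsmul]
    congr 1
    exact sum_congr rfl fun j _ => by rw [add_comm]; simpa using h.nat_mul n j

theorem Antiperiodic.sum_range_two_mul [AddCommGroup M] {f : ℕ → M} {p : ℕ}
    (h : Antiperiodic f p) : ∑ j ∈ range (2 * p), f j = 0 := by
  rw [two_mul, sum_range_add]
  simp only [add_comm p]
  rw [sum_congr rfl fun x _ => h x, sum_neg_distrib, add_neg_cancel]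

theorem Periodic.sum_range_comp_mul [AddCommMonoid M] {f : ℕ → M} {n c : ℕ}
    (h : Periodic f n) (hc : c.Coprime n) :
    ∑ j ∈ range n, f (c * j) = ∑ j ∈ range n, f j := by
  rcases Nat.eq_zero_or_pos n with rfl | hn
  · simp
  have hmaps : Set.MapsTo (fun j => c * j % n) (range n : Set ℕ) (range n : Set ℕ) :=
    fun j _ => by simpa using Nat.mod_lt _ hn
  have hinj : Set.InjOn (fun j => c * j % n) (range n : Set ℕ) := by
    intro j hj k hk hjk
    simp only [coe_range, Set.mem_Iio] at hj hk
    exact (Nat.ModEq.cancel_left_of_coprime (Nat.coprime_comm.mp hc) hjk).eq_of_lt_of_lt hj hk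
  exact sum_nbij (fun j => c * j % n) hmaps hinj
    (surjOn_of_injOn_of_card_le _ hmaps hinj le_rfl) fun j _ => (h.map_mod_nat _).symm

end Function

theorem sum_range_mul_mul_of_periodic {R : Type*} [CommSemiring R] {f g : ℕ → R} {a b : ℕ}
    (hf : Periodic f a) (hg : Periodic g b) (hab : a.Coprime b) :
    ∑ j ∈ range (a * b), f j * g j = (∑ j ∈ range a, f j) * ∑ j ∈ range b, g j := by
  rcases Nat.eq_zero_or_pos a with rfl | ha
  · simp
  rcases Nat.eq_zero_or_pos b with rfl | hb
  · simp
  have hcrt_lt := fun x y => Nat.chineseRemainder_lt_mul hab x y ha.ne' hb.ne'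
  rw [sum_mul_sum, ← sum_product']
  refine sum_nbij' (fun j => (j % a, j % b)) (fun x => Nat.chineseRemainder hab x.1 x.2)
    (fun j _ => by simp [Nat.mod_lt _ ha, Nat.mod_lt _ hb]) (fun x _ => by simpa using hcrt_lt _ _)
    ?_ ?_ fun j _ => by rw [← hf.map_mod_nat, ← hg.map_mod_nat]
  · intro j hj
    obtain ⟨h1, h2⟩ := (Nat.chineseRemainder hab (j % a) (j % b)).2
    refine Nat.ModEq.eq_of_lt_of_lt ?_ (hcrt_lt _ _) (by simpa using hj)
    exact (Nat.modEq_and_modEq_iff_modEq_mul hab).mp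
      ⟨h1.trans (Nat.mod_modEq j a), h2.trans (Nat.mod_modEq j b)⟩
  · rintro ⟨x, y⟩ hxy
    rw [mem_product, mem_range, mem_range] at hxy
    obtain ⟨h1, h2⟩ := (Nat.chineseRemainder hab x y).2
    exact Prod.ext (Eq.trans h1 (Nat.mod_eq_of_lt hxy.1)) (Eq.trans h2 (Nat.mod_eq_of_lt hxy.2))

theorem Nat.exists_prime_odd_factorization_of_not_isSquare {u : ℕ} (hu : u ≠ 0)
    (hsq : ¬IsSquare u) : ∃ p, p.Prime ∧ Odd (u.factorization p) := by
  contrapose! hsq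
  refine ⟨u.factorization.prod fun p k => p ^ (k / 2), ?_⟩
  conv_lhs => rw [← Nat.prod_factorization_pow_eq_self hu]
  rw [Finsupp.prod, Finsupp.prod, ← prod_mul_distrib]
  refine prod_congr rfl fun p hp => ?_
  have hk := Nat.even_iff.mp <| Nat.not_odd_iff_even.mp <| hsq p (Nat.prime_of_mem_primeFactors hp)
  rw [← pow_add]
  congr 1
  omega

theorem two_pow_mul_eq_two_mul_sq_iff {e u : ℕ} (hu : Odd u) :
    (∃ n : ℕ, 2 ^ e * u = 2 * n ^ 2) ↔ Odd e ∧ IsSquare u := by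
  constructor
  · rintro ⟨n, hn⟩
    have hn0 : n ≠ 0 := by
      rintro rfl
      simp [hu.pos.ne'] at hn
    obtain ⟨t, w, hw, rfl⟩ := Nat.exists_eq_two_pow_mul_odd hn0
    have h : 2 ^ e * u = 2 ^ (2 * t + 1) * (w * w) := by rw [hn]; ring
    have huw : u = w * w := by
      have := congrArg (fun x => ordCompl[2] x) h
      simpa only [Nat.ordCompl_pow_mul_of_not_dvd _ Nat.prime_two hu.not_two_dvd_nat,
        Nat.ordCompl_pow_mul_of_not_dvd _ Nat.prime_two (hw.mul hw).not_two_dvd_nat] using this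
    rw [← huw] at h
    have he : e = 2 * t + 1 :=
      Nat.pow_right_injective le_rfl (Nat.eq_of_mul_eq_mul_right hu.pos h)
    exact ⟨⟨t, by omega⟩, ⟨w, huw⟩⟩
  · rintro ⟨⟨t, rfl⟩, ⟨v, rfl⟩⟩
    exact ⟨2 ^ t * v, by ring⟩

theorem IsSquare.even_div_two_of_odd {u : ℕ} (hsq : IsSquare u) (hu : Odd u) : Even (u / 2) := by
  obtain ⟨v, rfl⟩ := hsq
  obtain ⟨t, rfl⟩ := (Nat.odd_mul.mp hu).1
  rw [show (2 * t + 1) * (2 * t + 1) = 4 * (t * t + t) + 1 by ring]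
  exact Nat.even_iff.mpr (by omega)

section Jacobi

theorem jacobiSym_natCast_eq_of_modEq {a b u : ℕ} (h : a ≡ b [MOD u]) :
    jacobiSym a u = jacobiSym b u :=
  jacobiSym.mod_left' (by exact_mod_cast h)

theorem jacobiSym_periodic (u : ℕ) : Periodic (fun j : ℕ => jacobiSym j u) u := fun j =>
  jacobiSym_natCast_eq_of_modEq (Nat.add_mod_right j u)

theorem exists_jacobiSym_eq_neg_one {u : ℕ} (hu : Odd u) (hsq : ¬IsSquare u) :
    ∃ c : ℕ, jacobiSym c u = -1 := by
  obtain ⟨p, hp, hk⟩ := Nat.exists_prime_odd_factorization_of_not_isSquare hu.pos.ne' hsq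
  have := Fact.mk hp
  have hp2 : p ≠ 2 := by
    rintro rfl
    exact hu.not_two_dvd_nat (Nat.dvd_of_factorization_pos hk.pos.ne')
  obtain ⟨b, hb⟩ := FiniteField.exists_nonsquare (F := ZMod p) (by rwa [ZMod.ringChar_zmod_n])
  have hpt : p.Coprime (ordCompl[p] u) :=
    (Nat.Prime.coprime_iff_not_dvd hp).mpr (Nat.not_dvd_ordCompl hp hu.pos.ne')
  -- `c` is a non-residue mod `p`, which divides `u` to an odd power, and `≡ 1` on the rest of `u`.
  obtain ⟨c, hcb, hc1⟩ := Nat.chineseRemainder hpt b.val 1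
  have hcp : jacobiSym c p = -1 := by
    rw [jacobiSym_natCast_eq_of_modEq hcb, ← jacobiSym.legendreSym.to_jacobiSym,
      legendreSym.eq_neg_one_iff']
    simpa using hb
  have hct : jacobiSym c (ordCompl[p] u) = 1 := by
    rw [jacobiSym_natCast_eq_of_modEq hc1]
    exact_mod_cast jacobiSym.one_left _
  refine ⟨c, ?_⟩
  rw [← Nat.ordProj_mul_ordCompl_eq_self u p, jacobiSym.mul_right' _ (pow_ne_zero _ hp.ne_zero)
    (Nat.ordCompl_pos p hu.pos.ne').ne', jacobiSym.pow_right, hcp, hct, hk.neg_one_pow, mul_one]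

theorem sum_range_jacobiSym_of_isSquare {u : ℕ} (hu : IsSquare u) :
    ∑ j ∈ range u, jacobiSym j u = u.totient := by
  obtain ⟨v, rfl⟩ := hu
  rcases eq_or_ne v 0 with rfl | hv
  · simp
  have := NeZero.mk hv
  have hJ : ∀ j : ℕ, jacobiSym j (v * v) = if (v * v).Coprime j then 1 else 0 := by
    intro j
    rw [jacobiSym.mul_right, ← sq]
    split_ifs with hj
    · exact jacobiSym.sq_one
        (by simpa [Int.gcd_natCast_natCast] using (Nat.coprime_mul_iff_left.mp hj).1.symm)
    · rw [jacobiSym.eq_zero_iff_not_coprime.mpr, zero_pow two_ne_zero]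
      rw [Int.gcd_natCast_natCast]
      exact fun h => hj (Nat.Coprime.mul_left (Nat.Coprime.symm h) (Nat.Coprime.symm h))
  rw [sum_congr rfl fun j _ => hJ j, sum_boole, Nat.totient_eq_card_coprime]

theorem sum_range_jacobiSym_of_not_isSquare {u : ℕ} (hu : Odd u) (hsq : ¬IsSquare u) :
    ∑ j ∈ range u, jacobiSym j u = 0 := by
  obtain ⟨c, hc⟩ := exists_jacobiSym_eq_neg_one hu hsq
  have hcu : c.Coprime u := by
    have : NeZero u := ⟨hu.pos.ne'⟩
    have := mt jacobiSym.eq_zero_iff_not_coprime.mpr (by rw [hc]; decide)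
    rwa [not_not, Int.gcd_natCast_natCast] at this
  have := (jacobiSym_periodic u).sum_range_comp_mul hcu
  simp only [Nat.cast_mul, jacobiSym.mul_left, hc, ← mul_sum] at this
  linarith

end Jacobi

section Kronecker

theorem kron_eq_zero_of_even {m : ℤ} (hm : Even m) {j : ℕ} (hj : Even j) : kron m j = 0 := by
  have hm2 : m % 2 = 0 := Int.even_iff.mp hm
  rcases eq_or_ne j 0 with rfl | hj0
  · have : ¬(m = 1 ∨ m = -1) := by omega
    simp [kron, this]
  · have := (Nat.Prime.factorization_pos_of_dvd Nat.prime_two hj0 (even_iff_two_dvd.mp hj)).ne'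
    rw [kron, if_neg hj0, kronTwo, if_pos hm2, zero_pow this, zero_mul]

theorem kron_of_odd (m : ℤ) {j : ℕ} (hj : Odd j) : kron m j = jacobiSym m j := by
  rw [kron, if_neg (by rintro rfl; simp at hj),
    Nat.factorization_eq_zero_of_not_dvd hj.not_two_dvd_nat]
  simp

theorem jacobiSym_two_pow_mul {e u j : ℕ} (hu : Odd u) (hj : Odd j) :
    jacobiSym ((2 ^ e * u : ℕ) : ℤ) j = χ₈ j ^ e * χ₄ j ^ (u / 2) * jacobiSym j u := by
  rw [Nat.cast_mul, Nat.cast_pow, jacobiSym.mul_left, jacobiSym.pow_left, Nat.cast_ofNat,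
    jacobiSym.at_two hj, jacobiSym.quadratic_reciprocity' hu hj, qrSign.neg_one_pow hj hu,
    pow_mul, ← χ₄_eq_neg_one_pow (Nat.odd_iff.mp hj), mul_assoc]

theorem kron_two_pow_mul {e u : ℕ} (he : e ≠ 0) (hu : Odd u) (j : ℕ) :
    kron ((2 ^ e * u : ℕ) : ℤ) j = χ₈ j ^ e * χ₄ j ^ (u / 2) * jacobiSym j u := by
  rcases Nat.even_or_odd j with hj | hj
  · have hχ : χ₈ (j : ZMod 8) = 0 := by
      rw [χ₈_nat_eq_if_mod_eight, if_pos (Nat.even_iff.mp hj)]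
    rw [kron_eq_zero_of_even _ hj, hχ, zero_pow he, zero_mul, zero_mul]
    exact_mod_cast (Nat.even_pow.mpr ⟨even_two, he⟩).mul_right u
  · rw [kron_of_odd _ hj, jacobiSym_two_pow_mul hu hj]

end Kronecker

section EighthRoot

noncomputable def zeta8 : ℂ := Complex.exp (2 * π * Complex.I / 8)

theorem exp_eq_zeta8_pow (j : ℕ) : Complex.exp (2 * π * Complex.I * j / 8) = zeta8 ^ j := by
  rw [zeta8, ← Complex.exp_nat_mul]
  ring_nf

theorem zeta8_sq : zeta8 ^ 2 = Complex.I := by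
  rw [← exp_eq_zeta8_pow]
  convert Complex.exp_pi_div_two_mul_I using 2
  push_cast
  ring

theorem zeta8_pow_four : zeta8 ^ 4 = -1 := by
  rw [← exp_eq_zeta8_pow]
  convert Complex.exp_pi_mul_I using 2
  push_cast
  ring

theorem zeta8_eq : zeta8 = √2 / 2 * (1 + Complex.I) := by
  rw [zeta8, show 2 * π * Complex.I / 8 = (π / 4 : ℝ) * Complex.I by push_cast; ring,
    Complex.exp_mul_I, ← Complex.ofReal_cos, ← Complex.ofReal_sin, cos_pi_div_four,
    sin_pi_div_four]
  push_cast
  ring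

theorem zeta8_sub_zeta8_pow_three : zeta8 - zeta8 ^ 3 = √2 :=
  calc zeta8 - zeta8 ^ 3 = zeta8 * (1 - zeta8 ^ 2) := by ring
    _ = (√2 : ℂ) := by
      rw [zeta8_sq, zeta8_eq]
      linear_combination (-(√2 : ℂ) / 2) * Complex.I_sq

end EighthRoot

section DyadicFactor

noncomputable def dyadicFactor (e k j : ℕ) : ℂ := ((χ₈ j ^ e * χ₄ j ^ k : ℤ) : ℂ) * zeta8 ^ j

theorem χ₈_add_four (x : ZMod 8) : χ₈ (x + 4) = -χ₈ x := by
  fin_cases x <;> rfl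

theorem dyadicFactor_add_four (e k j : ℕ) :
    dyadicFactor e k (j + 4) = (-1) ^ (e + 1) * dyadicFactor e k j := by
  have hχ₈ : χ₈ ((j + 4 : ℕ) : ZMod 8) = -χ₈ (j : ZMod 8) := by
    push_cast
    exact χ₈_add_four _
  have hχ₄ : χ₄ ((j + 4 : ℕ) : ZMod 4) = χ₄ (j : ZMod 4) := by
    rw [Nat.cast_add, show ((4 : ℕ) : ZMod 4) = 0 from rfl, add_zero]
  rw [dyadicFactor, dyadicFactor, hχ₈, hχ₄, pow_add, zeta8_pow_four]
  push_cast
  ring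

theorem dyadicFactor_periodic {e : ℕ} (he : Odd e) (k : ℕ) : Periodic (dyadicFactor e k) 4 :=
  fun j => by rw [dyadicFactor_add_four, he.add_one.neg_one_pow, one_mul]

theorem dyadicFactor_antiperiodic {e : ℕ} (he : Even e) (k : ℕ) :
    Antiperiodic (dyadicFactor e k) 4 :=
  fun j => by rw [dyadicFactor_add_four, he.add_one.neg_one_pow, neg_one_mul]

theorem sum_range_four_dyadicFactor {e k : ℕ} (he : Odd e) (hk : Even k) :
    ∑ j ∈ range 4, dyadicFactor e k j = √2 := by
  simpa [sum_range_succ, dyadicFactor, he.pos.ne', he.neg_one_pow, hk.neg_one_pow,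
    ← sub_eq_add_neg] using zeta8_sub_zeta8_pow_three

theorem kron_mul_exp_eq_dyadicFactor_mul {e u : ℕ} (he : e ≠ 0) (hu : Odd u) (j : ℕ) :
    ((kron ((2 ^ e * u : ℕ) : ℤ) j : ℤ) : ℂ) * Complex.exp (2 * π * Complex.I * j / 8) =
      dyadicFactor e (u / 2) j * jacobiSym j u := by
  rw [kron_two_pow_mul he hu, exp_eq_zeta8_pow, dyadicFactor]
  push_cast
  ring

end DyadicFactor

section TwistedSum

theorem sum_dyadicFactor_mul_jacobiSym_of_even {e u : ℕ} (he : Even e) (he0 : e ≠ 0) (hu : Odd u) :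
    ∑ j ∈ range (2 * (2 ^ e * u)), dyadicFactor e (u / 2) j * jacobiSym j u = 0 := by
  have hD : Antiperiodic (dyadicFactor e (u / 2)) (4 * u) := by
    obtain ⟨k, hk⟩ := hu
    have := (dyadicFactor_antiperiodic he (u / 2)).nat_odd_mul_antiperiodic k
    rwa [Nat.cast_id, show k * (2 * 4) + 4 = 4 * u by omega] at this
  have hJ : Periodic (fun j : ℕ => (jacobiSym j u : ℂ)) (4 * u) := by
    simpa using ((jacobiSym_periodic u).comp (Int.cast : ℤ → ℂ)).nat_mul 4
  have hf : Antiperiodic (fun j => dyadicFactor e (u / 2) j * jacobiSym j u) (4 * u) :=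
    fun j => by simp only [hD j, hJ j, neg_mul]
  obtain ⟨t, rfl⟩ : ∃ t, e = t + 2 := ⟨e - 2, by obtain ⟨r, hr⟩ := he; omega⟩
  rw [show 2 * (2 ^ (t + 2) * u) = 2 ^ t * (2 * (4 * u)) by ring,
    hf.periodic_two_mul.sum_range_mul, hf.sum_range_two_mul, smul_zero]

theorem sum_dyadicFactor_mul_jacobiSym_of_odd {e u : ℕ} (he : Odd e) (hu : Odd u) :
    ∑ j ∈ range (2 * (2 ^ e * u)), dyadicFactor e (u / 2) j * jacobiSym j u =
      2 ^ (e - 1) * (∑ j ∈ range 4, dyadicFactor e (u / 2) j) *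
        ((∑ j ∈ range u, jacobiSym j u : ℤ) : ℂ) := by
  have hD := dyadicFactor_periodic he (u / 2)
  have hJ : Periodic (fun j : ℕ => (jacobiSym j u : ℂ)) u :=
    (jacobiSym_periodic u).comp (Int.cast : ℤ → ℂ)
  have hD' : Periodic (dyadicFactor e (u / 2)) (4 * u) := by simpa [mul_comm] using hD.nat_mul u
  have hJ' : Periodic (fun j : ℕ => (jacobiSym j u : ℂ)) (4 * u) := by simpa using hJ.nat_mul 4
  have hf : Periodic (fun j => dyadicFactor e (u / 2) j * jacobiSym j u) (4 * u) :=
    fun j => by simp only [hD' j, hJ' j]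
  have hcop : Nat.Coprime 4 u := Nat.Coprime.pow_left 2 (Nat.coprime_two_left.mpr hu)
  obtain ⟨t, rfl⟩ := he
  rw [show 2 * (2 ^ (2 * t + 1) * u) = 2 ^ (2 * t) * (4 * u) by ring, hf.sum_range_mul,
    sum_range_mul_mul_of_periodic hD hJ hcop, nsmul_eq_mul, Int.cast_sum, Nat.add_sub_cancel]
  push_cast
  ring

end TwistedSum

/-- For every even positive integer m, ∑_{j mod 2m} (m/j) e(j/8) equals √2 · φ(m) when
m is twice a perfect square, and 0 otherwise. -/
theorem kronecker_gauss_type_sum (m : ℕ) (hm : 0 < m) (heven : Even m) :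
    ∑ j ∈ Finset.range (2 * m),
        ((kron (m : ℤ) j : ℤ) : ℂ) * Complex.exp (2 * π * Complex.I * j / 8) =
      if ∃ n : ℕ, m = 2 * n ^ 2 then ((Real.sqrt 2 : ℝ) : ℂ) * (m.totient : ℂ) else 0 := by
  obtain ⟨e, u, hu, rfl⟩ := Nat.exists_eq_two_pow_mul_odd hm.ne'
  have he0 : e ≠ 0 := by
    rintro rfl
    exact Nat.not_even_iff_odd.mpr hu (by simpa using heven)
  rw [sum_congr rfl fun j _ => kron_mul_exp_eq_dyadicFactor_mul he0 hu j,
    two_pow_mul_eq_two_mul_sq_iff hu]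
  rcases Nat.even_or_odd e with he | he
  · rw [sum_dyadicFactor_mul_jacobiSym_of_even he he0 hu,
      if_neg fun h => Nat.not_odd_iff_even.mpr he h.1]
  rw [sum_dyadicFactor_mul_jacobiSym_of_odd he hu]
  by_cases hsq : IsSquare u
  · rw [if_pos ⟨he, hsq⟩, sum_range_four_dyadicFactor he (hsq.even_div_two_of_odd hu),
      sum_range_jacobiSym_of_isSquare hsq,
      Nat.totient_mul (Nat.Coprime.pow_left e (Nat.coprime_two_left.mpr hu)),
      Nat.totient_prime_pow Nat.prime_two (Nat.pos_of_ne_zero he0)]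
    push_cast
    ring
  · rw [if_neg fun h => hsq h.2, sum_range_jacobiSym_of_not_isSquare hu hsq, Int.cast_zero,
      mul_zero]
end
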